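/- Let T ≥ 1 and let σ_1, ..., σ_T > 0, and define σ > 0 by 1/σ² = Σ_{i=1}^T 1/σ_i². Let ε > 0 and set δ = Φ(−εσ + 1/(2σ)) − e^ε · Φ(−εσ − 1/(2σ)), where Φ is the standard Gaussian CDF. Then for every measurable set S ⊆ (Fin T → ℝ), the product measure ⊗_{i} gaussianReal 0 σ_i² satisfies (⊗_i gaussianReal 0 σ_i²)(S) ≤ e^ε · (⊗_i gaussianReal 1 σ_i²)(S) + δ. -/

import Mathlib

/-!
Write `P` and `Q` for the two product measures. Coordinatewise, `N(0, σᵢ²)` has density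
`exp ((1 - 2xᵢ) / (2σᵢ²))` with respect to `N(1, σᵢ²)`, so `dP/dQ = exp ((1 - 2g) / (2σ²))`
for the statistic `g x = ∑ᵢ (σ² / σᵢ²) xᵢ`. Under `P` and `Q`, `g` has law `N(0, σ²)` and
`N(1, σ²)`: the composition is a single Gaussian mechanism with noise `σ`, observed through `g`.
For any `c`, `P S - c Q S` is maximised over `S` by the likelihood-ratio set `{c ≤ dP/dQ}`, which
for `c = e^ε` is `{g ≤ 1/2 - εσ²}`; its `P`- and `Q`-masses are the two values of `Φ` in `δ`.
-/

open MeasureTheory ProbabilityTheory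

/-- The standard Gaussian cumulative distribution function. -/
noncomputable def stdGaussianCDF (x : ℝ) : ℝ := (gaussianReal 0 1 (Set.Iic x)).toReal

open scoped NNReal ENNReal

theorem MeasureTheory.Measure.pi_withDensity {ι : Type*} [Fintype ι] {α : ι → Type*}
    [∀ i, MeasurableSpace (α i)] (μ : ∀ i, Measure (α i)) [∀ i, IsProbabilityMeasure (μ i)]
    {f : ∀ i, α i → ℝ≥0∞} (hf : ∀ i, Measurable (f i))
    [∀ i, SigmaFinite ((μ i).withDensity (f i))] :
    Measure.pi (fun i => (μ i).withDensity (f i)) =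
      (Measure.pi μ).withDensity (fun x => ∏ i, f i (x i)) := by
  refine Measure.pi_eq fun s hs => ?_
  have hfs : ∀ i, Measurable ((s i).indicator (f i)) := fun i => (hf i).indicator (hs i)
  have hbox : (Set.univ.pi s).indicator (fun x => ∏ i, f i (x i)) =
      fun x => ∏ i, (s i).indicator (f i) (x i) := by
    classical
    ext x
    simp only [Set.indicator_apply, Set.mem_univ_pi, Finset.prod_ite_zero, Finset.mem_univ,
      true_implies]
  -- The integral factorises by independence of the coordinates, hence probability measures.
  rw [withDensity_apply _ (.univ_pi hs), ← lintegral_indicator (.univ_pi hs), hbox,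
    lintegral_prod_eq_prod_lintegral_of_indepFun _ _
      (iIndepFun_pi fun i => (hfs i).aemeasurable) fun i => (hfs i).comp (measurable_pi_apply i)]
  refine Finset.prod_congr rfl fun i _ => ?_
  rw [(measurePreserving_eval μ i).lintegral_comp (hfs i), lintegral_indicator (hs i),
    withDensity_apply _ (hs i)]

/-- Neyman–Pearson: `ν S - c μ S` is largest for the likelihood-ratio set `{c ≤ dν/dμ}`. -/
theorem withDensity_apply_le_mul_add_sub {α : Type*} [MeasurableSpace α] (μ : Measure α)
    [IsFiniteMeasure μ] {r : α → ℝ≥0∞} (hr : Measurable r) {c : ℝ≥0∞} (hc : c ≠ ∞)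
    {S : Set α} (hS : MeasurableSet S) :
    μ.withDensity r S ≤
      c * μ S + (μ.withDensity r {x | c ≤ r x} - c * μ {x | c ≤ r x}) := by
  set ν := μ.withDensity r
  set A := {x | c ≤ r x}
  have hA : MeasurableSet A := measurableSet_le measurable_const hr
  have above : c * μ (A \ S) ≤ ν (A \ S) := by
    rw [withDensity_apply _ (hA.diff hS), ← setLIntegral_const]
    exact setLIntegral_mono' (hA.diff hS) fun x hx => hx.1
  have below : ν (S \ A) ≤ c * μ (S \ A) := by
    rw [withDensity_apply _ (hS.diff hA), ← setLIntegral_const]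
    exact setLIntegral_mono' (hS.diff hA) fun x hx => (not_le.mp hx.2).le
  have key : ν S + c * μ A ≤ c * μ S + ν A := by
    rw [← measure_inter_add_sdiff (μ := ν) S hA, ← measure_inter_add_sdiff (μ := ν) A hS,
      ← measure_inter_add_sdiff (μ := μ) S hA, ← measure_inter_add_sdiff (μ := μ) A hS,
      Set.inter_comm A S, mul_add, mul_add]
    calc ν (S ∩ A) + ν (S \ A) + (c * μ (S ∩ A) + c * μ (A \ S))
        ≤ ν (S ∩ A) + c * μ (S \ A) + (c * μ (S ∩ A) + ν (A \ S)) := by gcongr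
      _ = c * μ (S ∩ A) + c * μ (S \ A) + (ν (S ∩ A) + ν (A \ S)) := by ring
  calc ν S ≤ c * μ S + ν A - c * μ A :=
        ENNReal.le_sub_of_add_le_right (ENNReal.mul_ne_top hc (measure_ne_top _ _)) key
    _ ≤ _ := add_tsub_le_assoc

theorem gaussianReal_eq_withDensity_gaussianReal (m₁ m₂ : ℝ) {v : ℝ≥0} (hv : v ≠ 0) :
    gaussianReal m₁ v = (gaussianReal m₂ v).withDensity
      fun x => ENNReal.ofReal (Real.exp ((m₁ - m₂) * (2 * x - m₁ - m₂) / (2 * v))) := by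
  rw [gaussianReal_of_var_ne_zero _ hv, gaussianReal_of_var_ne_zero _ hv,
    ← withDensity_mul _ (measurable_gaussianPDF _ _) (by fun_prop)]
  congr 1
  ext x
  rw [Pi.mul_apply, gaussianPDF, gaussianPDF, ← ENNReal.ofReal_mul (gaussianPDFReal_nonneg _ _ _)]
  simp only [gaussianPDFReal, mul_assoc, ← Real.exp_add]
  congr 3
  field_simp
  ring

theorem pi_gaussianReal_eq_withDensity {ι : Type*} [Fintype ι] (m₁ m₂ : ι → ℝ) {v : ι → ℝ≥0}
    (hv : ∀ i, v i ≠ 0) :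
    Measure.pi (fun i => gaussianReal (m₁ i) (v i)) =
      (Measure.pi fun i => gaussianReal (m₂ i) (v i)).withDensity fun x =>
        ENNReal.ofReal (Real.exp (∑ i, (m₁ i - m₂ i) * (2 * x i - m₁ i - m₂ i) / (2 * v i))) := by
  simp_rw [fun i => gaussianReal_eq_withDensity_gaussianReal (m₁ i) (m₂ i) (hv i)]
  rw [Measure.pi_withDensity _ fun i => by fun_prop]
  simp_rw [Real.exp_sum, ENNReal.ofReal_prod_of_nonneg fun i _ => (Real.exp_pos _).le]

theorem pi_gaussianReal_map_sum_mul {ι : Type*} [Fintype ι] (m : ι → ℝ) (v : ι → ℝ≥0)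
    (a : ι → ℝ) :
    (Measure.pi fun i => gaussianReal (m i) (v i)).map (fun x => ∑ i, a i * x i) =
      gaussianReal (∑ i, a i * m i) (∑ i, (a i ^ 2).toNNReal * v i) := by
  have hsum : Measurable fun x : ι → ℝ => ∑ i, a i * x i := by fun_prop
  refine Measure.ext_of_charFun (funext fun t => ?_)
  rw [charFun_apply_real, integral_map hsum.aemeasurable (by fun_prop), charFun_gaussianReal]
  calc ∫ x, Complex.exp (t * (∑ i, a i * x i : ℝ) * Complex.I)
        ∂(Measure.pi fun i => gaussianReal (m i) (v i))
      = ∫ x, ∏ i, Complex.exp ((t * a i : ℝ) * x i * Complex.I)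
        ∂(Measure.pi fun i => gaussianReal (m i) (v i)) := by
        simp_rw [← Complex.exp_sum, Complex.ofReal_sum, Finset.mul_sum, Finset.sum_mul]
        push_cast
        simp_rw [mul_assoc]
    _ = ∏ i, charFun (gaussianReal (m i) (v i)) (t * a i) := by
        simp_rw [charFun_apply_real, ← integral_fintype_prod_eq_prod]
    _ = _ := by
        simp_rw [charFun_gaussianReal, ← Complex.exp_sum]
        congr 1
        push_cast [Real.coe_toNNReal _ (sq_nonneg _)]
        simp_rw [Finset.sum_sub_distrib, Finset.mul_sum, Finset.sum_mul, Finset.sum_div]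
        congr 1 <;> exact Finset.sum_congr rfl fun i _ => by ring

theorem stdGaussianCDF_nonneg (x : ℝ) : 0 ≤ stdGaussianCDF x :=
  ENNReal.toReal_nonneg

theorem gaussianReal_Iic (m : ℝ) {v : ℝ≥0} (hv : v ≠ 0) (c : ℝ) :
    gaussianReal m v (Set.Iic c) = ENNReal.ofReal (stdGaussianCDF ((c - m) / √v)) := by
  have hs : 0 < √(v : ℝ) := Real.sqrt_pos.mpr (by positivity)
  have hstd : (gaussianReal m v).map (fun x => (x - m) / √v) = gaussianReal 0 1 := by
    rw [show (fun x => (x - m) / √v) = (· / √v) ∘ (· - m) from rfl,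
      ← Measure.map_map (by fun_prop) (by fun_prop), gaussianReal_map_sub_const,
      gaussianReal_map_div_const]
    congr 1
    · simp
    · ext; simp [Real.sq_sqrt v.coe_nonneg, hv]
  have hpre : (fun x => (x - m) / √v) ⁻¹' Set.Iic ((c - m) / √v) = Set.Iic c := by
    ext x; simp [div_le_div_iff_of_pos_right hs]
  rw [stdGaussianCDF, ← hstd, Measure.map_apply (by fun_prop) measurableSet_Iic, hpre,
    ENNReal.ofReal_toReal (measure_ne_top _ _)]

/-- The privacy loss `log (dN(0, σ²) / dN(1, σ²))` at `y`. -/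
noncomputable def gaussianLoss (σ y : ℝ) : ℝ := (1 - 2 * y) / (2 * σ ^ 2)

theorem le_gaussianLoss_iff {σ : ℝ} (hσ : σ ≠ 0) {ε y : ℝ} :
    ε ≤ gaussianLoss σ y ↔ y ≤ 1 / 2 - ε * σ ^ 2 := by
  rw [gaussianLoss, le_div_iff₀ (by positivity)]
  constructor <;> intro h <;> linarith

section Composition

variable {ι : Type*} [Fintype ι]

/-- The inverse-variance weighted mean of `x` when `1 / σ ^ 2 = ∑ i, 1 / σs i ^ 2`. -/
noncomputable def invVarMean (σs : ι → ℝ) (σ : ℝ) (x : ι → ℝ) : ℝ :=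
  ∑ i, σ ^ 2 / σs i ^ 2 * x i

variable {σs : ι → ℝ} {σ : ℝ}

@[fun_prop]
theorem measurable_invVarMean : Measurable (invVarMean σs σ) := by
  unfold invVarMean
  fun_prop

theorem pi_gaussianReal_map_invVarMean (hσs : ∀ i, σs i ≠ 0) (hσ : σ ≠ 0)
    (hσdef : 1 / σ ^ 2 = ∑ i, 1 / σs i ^ 2) (m : ℝ) :
    (Measure.pi fun i => gaussianReal m (σs i ^ 2).toNNReal).map (invVarMean σs σ) =
      gaussianReal m (σ ^ 2).toNNReal := by
  unfold invVarMean
  rw [pi_gaussianReal_map_sum_mul]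
  congr 1
  · calc ∑ i, σ ^ 2 / σs i ^ 2 * m = σ ^ 2 * (∑ i, 1 / σs i ^ 2) * m := by
          rw [Finset.mul_sum, Finset.sum_mul]
          exact Finset.sum_congr rfl fun i _ => by ring
      _ = m := by rw [← hσdef]; field_simp
  · rw [← NNReal.coe_inj]
    push_cast [Real.coe_toNNReal _ (sq_nonneg _)]
    calc ∑ i, (σ ^ 2 / σs i ^ 2) ^ 2 * σs i ^ 2 = σ ^ 4 * ∑ i, 1 / σs i ^ 2 := by
          rw [Finset.mul_sum]
          exact Finset.sum_congr rfl fun i _ => by field_simp [hσs i]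
      _ = σ ^ 2 := by rw [← hσdef]; field_simp

theorem pi_gaussianReal_invVarMean_preimage_Iic (hσs : ∀ i, σs i ≠ 0) (hσ : 0 < σ)
    (hσdef : 1 / σ ^ 2 = ∑ i, 1 / σs i ^ 2) (m c : ℝ) :
    Measure.pi (fun i => gaussianReal m (σs i ^ 2).toNNReal) (invVarMean σs σ ⁻¹' Set.Iic c) =
      ENNReal.ofReal (stdGaussianCDF ((c - m) / σ)) := by
  rw [← Measure.map_apply measurable_invVarMean measurableSet_Iic,
    pi_gaussianReal_map_invVarMean hσs hσ.ne' hσdef,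
    gaussianReal_Iic _ (Real.toNNReal_pos.mpr (by positivity)).ne',
    Real.coe_toNNReal _ (sq_nonneg _), Real.sqrt_sq hσ.le]

theorem sum_gaussianLoss_eq (hσs : ∀ i, σs i ≠ 0) (hσ : σ ≠ 0)
    (hσdef : 1 / σ ^ 2 = ∑ i, 1 / σs i ^ 2) (x : ι → ℝ) :
    ∑ i, gaussianLoss (σs i) (x i) = gaussianLoss σ (invVarMean σs σ x) := by
  have hmean : invVarMean σs σ x = σ ^ 2 * ∑ i, x i / σs i ^ 2 := by
    rw [invVarMean, Finset.mul_sum]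
    exact Finset.sum_congr rfl fun i _ => by ring
  calc ∑ i, gaussianLoss (σs i) (x i) = 1 / 2 * (1 / σ ^ 2) - ∑ i, x i / σs i ^ 2 := by
        rw [hσdef, Finset.mul_sum, ← Finset.sum_sub_distrib]
        exact Finset.sum_congr rfl fun i _ => by rw [gaussianLoss]; field_simp [hσs i]
    _ = gaussianLoss σ (invVarMean σs σ x) := by
        rw [gaussianLoss, hmean]
        field_simp

theorem pi_gaussianReal_zero_eq_withDensity (hσs : ∀ i, σs i ≠ 0) (hσ : σ ≠ 0)
    (hσdef : 1 / σ ^ 2 = ∑ i, 1 / σs i ^ 2) :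
    Measure.pi (fun i => gaussianReal 0 (σs i ^ 2).toNNReal) =
      (Measure.pi fun i => gaussianReal 1 (σs i ^ 2).toNNReal).withDensity
        fun x => ENNReal.ofReal (Real.exp (gaussianLoss σ (invVarMean σs σ x))) := by
  have hv : ∀ i, (σs i ^ 2).toNNReal ≠ 0 := fun i =>
    (Real.toNNReal_pos.mpr (sq_pos_iff.mpr (hσs i))).ne'
  rw [pi_gaussianReal_eq_withDensity (fun _ => 0) (fun _ => 1) hv]
  congr with x
  rw [← sum_gaussianLoss_eq hσs hσ hσdef]
  congr 2
  refine Finset.sum_congr rfl fun i _ => ?_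
  rw [gaussianLoss, Real.coe_toNNReal _ (sq_nonneg _)]
  ring

end Composition

theorem gaussian_composition_dp_general (T : ℕ) (σs : Fin T → ℝ)
    (hσs : ∀ i, 0 < σs i) (σ : ℝ) (hσ : 0 < σ)
    (hσdef : 1 / σ ^ 2 = ∑ i, 1 / (σs i) ^ 2) (ε : ℝ) (δ : ℝ)
    (hδ : δ = stdGaussianCDF (-ε * σ + 1 / (2 * σ)) -
        Real.exp ε * stdGaussianCDF (-ε * σ - 1 / (2 * σ))) :
    ∀ S : Set (Fin T → ℝ), MeasurableSet S →
      Measure.pi (fun i => gaussianReal 0 (Real.toNNReal ((σs i) ^ 2))) S ≤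
        ENNReal.ofReal (Real.exp ε) *
            Measure.pi (fun i => gaussianReal 1 (Real.toNNReal ((σs i) ^ 2))) S +
          ENNReal.ofReal δ := by
  intro S hS
  have hσs' : ∀ i, σs i ≠ 0 := fun i => (hσs i).ne'
  have hlevel : {x | ENNReal.ofReal (Real.exp ε) ≤
      ENNReal.ofReal (Real.exp (gaussianLoss σ (invVarMean σs σ x)))} =
      invVarMean σs σ ⁻¹' Set.Iic (1 / 2 - ε * σ ^ 2) := by
    ext x
    simp only [Set.mem_ofPred_eq, ENNReal.ofReal_le_ofReal_iff (Real.exp_pos _).le,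
      Real.exp_le_exp, le_gaussianLoss_iff hσ.ne']
    rfl
  have h₀ : (1 / 2 - ε * σ ^ 2 - 0) / σ = -ε * σ + 1 / (2 * σ) := by field_simp; ring
  have h₁ : (1 / 2 - ε * σ ^ 2 - 1) / σ = -ε * σ - 1 / (2 * σ) := by field_simp; ring
  rw [pi_gaussianReal_zero_eq_withDensity hσs' hσ.ne' hσdef]
  refine (withDensity_apply_le_mul_add_sub _ (by unfold gaussianLoss; fun_prop)
    (c := ENNReal.ofReal (Real.exp ε)) ENNReal.ofReal_ne_top hS).trans_eq ?_
  rw [← pi_gaussianReal_zero_eq_withDensity hσs' hσ.ne' hσdef, hlevel,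
    pi_gaussianReal_invVarMean_preimage_Iic hσs' hσ hσdef,
    pi_gaussianReal_invVarMean_preimage_Iic hσs' hσ hσdef, h₀, h₁, hδ,
    ENNReal.ofReal_sub _ (mul_nonneg (Real.exp_pos ε).le (stdGaussianCDF_nonneg _)),
    ENNReal.ofReal_mul (Real.exp_pos ε).le]

/-- composition of Gaussian mechanisms: let `T ≥ 1`, `σ_1, …, σ_T > 0`, and
define `σ > 0` by `1/σ² = Σ_i 1/σ_i²`. For `ε > 0` and
`δ = Φ(−εσ + 1/(2σ)) − e^ε Φ(−εσ − 1/(2σ))`, every measurable `S ⊆ (Fin T → ℝ)` satisfies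
`(⊗_i N(0,σ_i²))(S) ≤ e^ε · (⊗_i N(1,σ_i²))(S) + δ`. -/
theorem gaussian_composition_dp (T : ℕ) (hT : 1 ≤ T) (σs : Fin T → ℝ)
    (hσs : ∀ i, 0 < σs i) (σ : ℝ) (hσ : 0 < σ)
    (hσdef : 1 / σ ^ 2 = ∑ i, 1 / (σs i) ^ 2) (ε : ℝ) (hε : 0 < ε) (δ : ℝ)
    (hδ : δ = stdGaussianCDF (-ε * σ + 1 / (2 * σ)) -
        Real.exp ε * stdGaussianCDF (-ε * σ - 1 / (2 * σ))) :
    ∀ S : Set (Fin T → ℝ), MeasurableSet S →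
      Measure.pi (fun i => gaussianReal 0 (Real.toNNReal ((σs i) ^ 2))) S ≤
        ENNReal.ofReal (Real.exp ε) *
            Measure.pi (fun i => gaussianReal 1 (Real.toNNReal ((σs i) ^ 2))) S +
          ENNReal.ofReal δ :=
  gaussian_composition_dp_general T σs hσs σ hσ hσdef ε δ hδ
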